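/- arXiv:2405.03668 — 2 statements merged into one kernel-verified Lean document; each statement's English description precedes it below -/
import Mathlib

section
/- The curve ∇θ(t) = (−√(−a/α)(sin(ωt) + (b/a) cos(ωt)), √(−a/α)(cos(ωt) − (b/a) sin(ωt))) satisfies the adjoint equation d(∇θ)/dt = −J(t)ᵀ ∇θ, where J(t) is the Jacobian of the Hopf normal form vector field evaluated on the periodic orbit at (r₀ cos(ωt), r₀ sin(ωt)). -/
/-- The Hopf normal form vector field on ℝ². -/
noncomputable def hopfField (α β a b : ℝ) (p : ℝ × ℝ) : ℝ × ℝ :=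
  (α * p.1 - β * p.2 + (a * p.1 - b * p.2) * (p.1 ^ 2 + p.2 ^ 2),
   β * p.1 + α * p.2 + (b * p.1 + a * p.2) * (p.1 ^ 2 + p.2 ^ 2))

/-- The Jacobian matrix of the Hopf normal form vector field at a point. -/
noncomputable def hopfJacobian (α β a b : ℝ) (p : ℝ × ℝ) : Matrix (Fin 2) (Fin 2) ℝ :=
  !![fderiv ℝ (fun q => (hopfField α β a b q).1) p (1, 0),
     fderiv ℝ (fun q => (hopfField α β a b q).1) p (0, 1);
     fderiv ℝ (fun q => (hopfField α β a b q).2) p (1, 0),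
     fderiv ℝ (fun q => (hopfField α β a b q).2) p (0, 1)]

/-!
In polar form the field is `ṙ = r (α + a r²)`, `φ̇ = β + b r²`, so the circle `r = r₀` is a
periodic orbit of angular speed `ω`. Writing `p` for a point with `|p|² = ρ` and `A = [[a, -b], [b, a]]`,
the Jacobian is `(α + aρ) I + (β + bρ) R + 2 (A p) pᵀ` with `R` the rotation by `π/2`.
On the orbit the first term vanishes and `β + bρ = ω`, so `Jᵀ v = -ω R v` for every `v ⊥ A p`.
The curve `∇θ(t)` is a fixed vector rotated by `ω t`, hence `∇θ' = ω R ∇θ`, and it is orthogonal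
to `A p(t)`; together these give the adjoint equation.
-/

open Real Matrix

section Jacobian

variable (α β a b : ℝ)

theorem hasFDerivAt_hopfField_fst (p : ℝ × ℝ) :
    HasFDerivAt (fun q => (hopfField α β a b q).1)
      ((α + a * (p.1 ^ 2 + p.2 ^ 2) + 2 * p.1 * (a * p.1 - b * p.2)) •
          ContinuousLinearMap.fst ℝ ℝ ℝ +
        (-β - b * (p.1 ^ 2 + p.2 ^ 2) + 2 * p.2 * (a * p.1 - b * p.2)) •
          ContinuousLinearMap.snd ℝ ℝ ℝ) p := by
  have hx := hasFDerivAt_fst (𝕜 := ℝ) (E := ℝ) (F := ℝ) (p := p)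
  have hy := hasFDerivAt_snd (𝕜 := ℝ) (E := ℝ) (F := ℝ) (p := p)
  have H := ((hx.const_mul α).sub (hy.const_mul β)).add
    (((hx.const_mul a).sub (hy.const_mul b)).mul ((hx.pow 2).add (hy.pow 2)))
  refine H.congr_fderiv ?_
  ext <;> simp <;> ring

theorem hasFDerivAt_hopfField_snd (p : ℝ × ℝ) :
    HasFDerivAt (fun q => (hopfField α β a b q).2)
      ((β + b * (p.1 ^ 2 + p.2 ^ 2) + 2 * p.1 * (b * p.1 + a * p.2)) •
          ContinuousLinearMap.fst ℝ ℝ ℝ +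
        (α + a * (p.1 ^ 2 + p.2 ^ 2) + 2 * p.2 * (b * p.1 + a * p.2)) •
          ContinuousLinearMap.snd ℝ ℝ ℝ) p := by
  have hx := hasFDerivAt_fst (𝕜 := ℝ) (E := ℝ) (F := ℝ) (p := p)
  have hy := hasFDerivAt_snd (𝕜 := ℝ) (E := ℝ) (F := ℝ) (p := p)
  have H := ((hx.const_mul β).add (hy.const_mul α)).add
    (((hx.const_mul b).add (hy.const_mul a)).mul ((hx.pow 2).add (hy.pow 2)))
  refine H.congr_fderiv ?_
  ext <;> simp <;> ring

theorem hopfJacobian_transpose_mulVec (x y : ℝ) (v : Fin 2 → ℝ) :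
    (hopfJacobian α β a b (x, y))ᵀ *ᵥ v =
      (α + a * (x ^ 2 + y ^ 2)) • v + (β + b * (x ^ 2 + y ^ 2)) • ![v 1, -v 0] +
        (2 * ((a * x - b * y) * v 0 + (b * x + a * y) * v 1)) • ![x, y] := by
  ext i
  fin_cases i <;>
    simp [hopfJacobian, (hasFDerivAt_hopfField_fst α β a b _).fderiv,
      (hasFDerivAt_hopfField_snd α β a b _).fderiv, mulVec, dotProduct, Fin.sum_univ_two,
      vecHead, vecTail] <;>
    ring

end Jacobian

theorem hasDerivAt_rotating_vector (u v ω t : ℝ) :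
    HasDerivAt (fun t => ![u * cos (ω * t) - v * sin (ω * t), u * sin (ω * t) + v * cos (ω * t)])
      (ω • ![-(u * sin (ω * t) + v * cos (ω * t)), u * cos (ω * t) - v * sin (ω * t)]) t := by
  have hωt : HasDerivAt (fun t => ω * t) ω t := by
    simpa using (hasDerivAt_id t).const_mul ω
  have hsin := (hasDerivAt_sin (ω * t)).comp t hωt
  have hcos := (hasDerivAt_cos (ω * t)).comp t hωt
  refine hasDerivAt_pi.2 fun i => ?_
  fin_cases i
  · refine ((hcos.const_mul u).sub (hsin.const_mul v)).congr_deriv ?_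
    simp only [Fin.zero_eta, cons_val_zero, Pi.smul_apply, smul_eq_mul]
    ring
  · refine ((hsin.const_mul u).add (hcos.const_mul v)).congr_deriv ?_
    simp only [Fin.mk_one, cons_val_one, cons_val_zero, Pi.smul_apply, smul_eq_mul]
    ring

theorem hopf_phase_gradient_adjoint
    (α β a b : ℝ) (hα : 0 < α) (ha : a < 0)
    (r₀ ω : ℝ) (hr₀ : r₀ = Real.sqrt (-α / a)) (hω : ω = β - α * b / a)
    (nablaθ : ℝ → Fin 2 → ℝ)
    (hnabla : ∀ t : ℝ, nablaθ t =
      ![-Real.sqrt (-a / α) * (Real.sin (ω * t) + b * Real.cos (ω * t) / a),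
        Real.sqrt (-a / α) * (Real.cos (ω * t) - b * Real.sin (ω * t) / a)]) :
    ∀ t : ℝ,
      HasDerivAt nablaθ
        (-(Matrix.mulVec
            (hopfJacobian α β a b (r₀ * Real.cos (ω * t), r₀ * Real.sin (ω * t))).transpose
            (nablaθ t))) t := by
  intro t
  set k := √(-a / α)
  have ha0 : a ≠ 0 := ha.ne
  have hρ : (r₀ * cos (ω * t)) ^ 2 + (r₀ * sin (ω * t)) ^ 2 = -α / a := by
    rw [mul_pow, mul_pow, ← mul_add, cos_sq_add_sin_sq, mul_one, hr₀,
      sq_sqrt (div_nonneg_of_nonpos (neg_nonpos.2 hα.le) ha.le)]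
  have hradial : α + a * (-α / a) = 0 := by field_simp; ring
  have hangular : β + b * (-α / a) = ω := by rw [hω]; ring
  have horth : (a * (r₀ * cos (ω * t)) - b * (r₀ * sin (ω * t))) * nablaθ t 0 +
      (b * (r₀ * cos (ω * t)) + a * (r₀ * sin (ω * t))) * nablaθ t 1 = 0 := by
    simp only [hnabla, cons_val_zero, cons_val_one]
    field_simp
    ring
  rw [hopfJacobian_transpose_mulVec, hρ, hradial, hangular, horth, funext hnabla]
  convert hasDerivAt_rotating_vector (-k * b / a) k ω t using 1
  · funext s
    ext i
    fin_cases i <;> simp <;> ring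
  · ext i
    fin_cases i <;> simp <;> ring
end

section
/- The curve ∇ψ(t) = C·(cos(ωt), sin(ωt)) satisfies the amplitude adjoint equation d(∇ψ)/dt = −(J(t)ᵀ − κ·Id) ∇ψ with κ = −2α, where J(t) is the Jacobian of the Hopf normal form vector field evaluated on the periodic orbit. -/
theorem fderiv_linear_add_linear_mul_normSq (c₁ c₂ d₁ d₂ : ℝ) (p v : ℝ × ℝ) :
    fderiv ℝ (fun q : ℝ × ℝ => c₁ * q.1 + c₂ * q.2 + (d₁ * q.1 + d₂ * q.2) * (q.1 ^ 2 + q.2 ^ 2)) p v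
      = c₁ * v.1 + c₂ * v.2 + (d₁ * v.1 + d₂ * v.2) * (p.1 ^ 2 + p.2 ^ 2)
        + (d₁ * p.1 + d₂ * p.2) * (2 * p.1 * v.1 + 2 * p.2 * v.2) := by
  have hfst : HasFDerivAt (fun q : ℝ × ℝ => q.1) (ContinuousLinearMap.fst ℝ ℝ ℝ) p :=
    hasFDerivAt_fst
  have hsnd : HasFDerivAt (fun q : ℝ × ℝ => q.2) (ContinuousLinearMap.snd ℝ ℝ ℝ) p :=
    hasFDerivAt_snd
  have hlin₁ := (hfst.const_mul c₁).add (hsnd.const_mul c₂)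
  have hlin₂ := (hfst.const_mul d₁).add (hsnd.const_mul d₂)
  have hsq := (hfst.pow 2).add (hsnd.pow 2)
  have hderiv : HasFDerivAt
      (fun q : ℝ × ℝ => c₁ * q.1 + c₂ * q.2 + (d₁ * q.1 + d₂ * q.2) * (q.1 ^ 2 + q.2 ^ 2)) _ p :=
    hlin₁.add (hlin₂.mul hsq)
  rw [hderiv.fderiv]
  simp only [Pi.add_apply, Nat.add_one_sub_one, pow_one, nsmul_eq_mul, Nat.cast_ofNat, smul_add,
    add_apply, smul_apply, ContinuousLinearMap.coe_fst', ContinuousLinearMap.coe_snd', smul_eq_mul]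
  ring

theorem hopfJacobian_eq (α β a b : ℝ) (p : ℝ × ℝ) :
    hopfJacobian α β a b p =
      !![α + a * (p.1 ^ 2 + p.2 ^ 2) + 2 * p.1 * (a * p.1 - b * p.2),
         -β - b * (p.1 ^ 2 + p.2 ^ 2) + 2 * p.2 * (a * p.1 - b * p.2);
         β + b * (p.1 ^ 2 + p.2 ^ 2) + 2 * p.1 * (b * p.1 + a * p.2),
         α + a * (p.1 ^ 2 + p.2 ^ 2) + 2 * p.2 * (b * p.1 + a * p.2)] := by
  have hfst : (fun q => (hopfField α β a b q).1) = fun q : ℝ × ℝ =>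
      α * q.1 + -β * q.2 + (a * q.1 + -b * q.2) * (q.1 ^ 2 + q.2 ^ 2) := by
    ext q; simp only [hopfField]; ring
  have hsnd : (fun q => (hopfField α β a b q).2) = fun q : ℝ × ℝ =>
      β * q.1 + α * q.2 + (b * q.1 + a * q.2) * (q.1 ^ 2 + q.2 ^ 2) := by
    ext q; simp only [hopfField]
  rw [hopfJacobian, hfst, hsnd]
  simp only [fderiv_linear_add_linear_mul_normSq]
  ext i j; fin_cases i <;> fin_cases j <;> simp <;> ring

open Matrix in
theorem hopfJacobian_transpose_mulVec_radial (α β a b r θ C : ℝ) :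
    (hopfJacobian α β a b (r * Real.cos θ, r * Real.sin θ))ᵀ *ᵥ ![C * Real.cos θ, C * Real.sin θ]
      = ![C * ((α + 3 * a * r ^ 2) * Real.cos θ + (β + b * r ^ 2) * Real.sin θ),
          C * ((α + 3 * a * r ^ 2) * Real.sin θ - (β + b * r ^ 2) * Real.cos θ)] := by
  have hpyth := Real.sin_sq_add_cos_sq θ
  rw [hopfJacobian_eq]
  ext i; fin_cases i <;>
    simp only [mulVec, dotProduct, Fin.sum_univ_two, transpose_apply, of_apply, cons_val',
      cons_val_zero, cons_val_one, cons_val_fin_one, Fin.zero_eta, Fin.mk_one]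
  · linear_combination (3 * a * r ^ 2 * C * Real.cos θ + b * r ^ 2 * C * Real.sin θ) * hpyth
  · linear_combination (3 * a * r ^ 2 * C * Real.sin θ - b * r ^ 2 * C * Real.cos θ) * hpyth

theorem hasDerivAt_rotating_vector_s7 (C ω t : ℝ) :
    HasDerivAt (fun s => ![C * Real.cos (ω * s), C * Real.sin (ω * s)])
      (ω • ![-(C * Real.sin (ω * t)), C * Real.cos (ω * t)]) t := by
  rw [hasDerivAt_pi]
  have hlin := (hasDerivAt_id t).const_mul ω
  intro i; fin_cases i
  · simpa [mul_comm, mul_left_comm] using ((Real.hasDerivAt_cos _).comp t hlin).const_mul C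
  · simpa [mul_comm, mul_left_comm] using ((Real.hasDerivAt_sin _).comp t hlin).const_mul C

theorem sq_sqrt_neg_div_of_neg {α a : ℝ} (hα : 0 ≤ α) (ha : a < 0) :
    Real.sqrt (-α / a) ^ 2 = -α / a :=
  Real.sq_sqrt (div_nonneg_of_nonpos (neg_nonpos.mpr hα) ha.le)

theorem hopf_amplitude_gradient_adjoint
    (α β a b : ℝ) (hα : 0 < α) (ha : a < 0)
    (r₀ ω κ C : ℝ) (hr₀ : r₀ = Real.sqrt (-α / a)) (hω : ω = β - α * b / a)
    (hκ : κ = -2 * α)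
    (nablaψ : ℝ → Fin 2 → ℝ)
    (hnabla : ∀ t : ℝ, nablaψ t = ![C * Real.cos (ω * t), C * Real.sin (ω * t)]) :
    ∀ t : ℝ,
      HasDerivAt nablaψ
        (-(Matrix.mulVec
            ((hopfJacobian α β a b (r₀ * Real.cos (ω * t), r₀ * Real.sin (ω * t))).transpose
              - κ • (1 : Matrix (Fin 2) (Fin 2) ℝ))
            (nablaψ t))) t := by
  intro t
  have hr₀_sq : r₀ ^ 2 = -α / a := hr₀ ▸ sq_sqrt_neg_div_of_neg hα.le ha
  have hradial : α + 3 * a * r₀ ^ 2 = -2 * α := by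
    rw [hr₀_sq]; field_simp [ha.ne]; ring
  have hangular : β + b * r₀ ^ 2 = ω := by
    rw [hr₀_sq, hω]; ring
  rw [hnabla t, funext hnabla, Matrix.sub_mulVec, Matrix.smul_mulVec, Matrix.one_mulVec,
    hopfJacobian_transpose_mulVec_radial, hradial, hangular, hκ]
  convert hasDerivAt_rotating_vector_s7 C ω t using 1
  ext i; fin_cases i <;> simp <;> ring
end
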